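/- arXiv:1605.09541 — 2 statements merged into one kernel-verified Lean document; each statement's English description precedes it below -/
import Mathlib

section
/- Σ_{n=1}^{∞} ζ(2n) / (n(2n+1)·4^n) = log π − 1. -/
/-!
Writing `ζ(2n) = ∑ₖ k^(-2n)` turns the left side into a double series of positive terms, which
may be summed over `n` first. With `x = 1/(2k)`, the inner sum `∑ₙ x^(2n) / (n(2n+1))` comes from
the series of `log (1 - x²)` and `artanh x`, and equals
`2 + 2 log (2k) + (2k-1) log (2k-1) - (2k+1) log (2k+1)`. Its partial sums over `k ≤ N`
telescope to `2N + 2N log 2 + 2 log N! - (2N+1) log (2N+1)`, which by Stirling's formula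
tends to `log π - 1`.
-/

open Real Filter Topology

/-- Real Riemann zeta values via the series `∑ 1/k^m`. -/
noncomputable def zetaR (m : ℕ) : ℝ := ∑' k : ℕ, 1 / ((k : ℝ) + 1) ^ m

theorem hasSum_zetaR {m : ℕ} (hm : 2 ≤ m) :
    HasSum (fun k : ℕ => 1 / ((k : ℝ) + 1) ^ m) (zetaR m) := by
  have h := (summable_nat_add_iff 1).mpr (summable_one_div_nat_pow.mpr hm)
  exact (h.congr fun k => by push_cast; rfl).hasSum

theorem hasSum_pow_two_mul_add_two_div {x : ℝ} (hx : |x| < 1) (hx0 : x ≠ 0) :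
    HasSum (fun n : ℕ => x ^ (2 * n + 2) / (((n : ℝ) + 1) * (2 * n + 3)))
      (2 - log (1 - x ^ 2) - (log (1 + x) - log (1 - x)) / x) := by
  have hlog : HasSum (fun n : ℕ => (x ^ 2) ^ (n + 1) / ((n : ℝ) + 1)) (-log (1 - x ^ 2)) :=
    hasSum_pow_div_log_of_abs_lt_one (by rw [abs_pow, sq_lt_one_iff₀ (abs_nonneg x)]; exact hx)
  have hartanh := (hasSum_nat_add_iff' 1).mpr (hasSum_log_sub_log_of_abs_lt_one hx)
  simp only [Finset.range_one, Finset.sum_singleton, Nat.cast_zero, mul_zero, zero_add, div_one,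
    mul_one, pow_one] at hartanh
  have hval : 2 - log (1 - x ^ 2) - (log (1 + x) - log (1 - x)) / x =
      -log (1 - x ^ 2) - (log (1 + x) - log (1 - x) - 2 * x) / x := by
    field_simp
    ring
  rw [hval]
  refine (hlog.sub (hartanh.div_const x)).congr_fun fun n => ?_
  push_cast
  field_simp
  ring

noncomputable def rowSum (m : ℝ) : ℝ :=
  2 + 2 * log (2 * m) + (2 * m - 1) * log (2 * m - 1) - (2 * m + 1) * log (2 * m + 1)

theorem hasSum_rowSum {m : ℝ} (hm : 1 / 2 < m) :
    HasSum (fun n : ℕ => (1 / (2 * m)) ^ (2 * n + 2) / (((n : ℝ) + 1) * (2 * n + 3)))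
      (rowSum m) := by
  have h1 : 0 < 2 * m - 1 := by linarith
  have h2 : 0 < 2 * m := by linarith
  have h3 : 0 < 2 * m + 1 := by linarith
  have hx : |1 / (2 * m)| < 1 := by
    rw [abs_of_pos (by positivity), div_lt_one h2]; linarith
  convert hasSum_pow_two_mul_add_two_div hx (by positivity) using 1
  have e1 : 1 - (1 / (2 * m)) ^ 2 = (2 * m - 1) * (2 * m + 1) / (2 * m) ^ 2 := by
    field_simp; ring
  have e2 : 1 + 1 / (2 * m) = (2 * m + 1) / (2 * m) := by field_simp
  have e3 : 1 - 1 / (2 * m) = (2 * m - 1) / (2 * m) := by field_simp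
  rw [e1, e2, e3, log_div (by positivity) (by positivity), log_mul h1.ne' h3.ne', log_pow,
    log_div h3.ne' h2.ne', log_div h1.ne' h2.ne', rowSum]
  field_simp
  push_cast
  ring

open scoped Nat in
theorem sum_range_rowSum (N : ℕ) :
    ∑ k ∈ Finset.range N, rowSum (k + 1) =
      2 * N + 2 * N * log 2 + 2 * log N ! - (2 * N + 1) * log (2 * N + 1) := by
  induction N with
  | zero => simp
  | succ N ih =>
    rw [Finset.sum_range_succ, ih, rowSum, Nat.factorial_succ]
    push_cast
    rw [log_mul (x := (N : ℝ) + 1) (by positivity) (by positivity),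
      log_mul (x := 2) two_ne_zero (by positivity), show 2 * ((N : ℝ) + 1) - 1 = 2 * N + 1 by ring]
    ring

open Stirling in
theorem sum_range_rowSum_eq_log_stirlingSeq {N : ℕ} (hN : N ≠ 0) :
    ∑ k ∈ Finset.range N, rowSum (k + 1) =
      2 * log (stirlingSeq N) - (2 * N + 1) * log (1 + 1 / (2 * N)) := by
  have hN0 : (0 : ℝ) < N := by positivity
  have hratio : 1 + 1 / (2 * (N : ℝ)) = (2 * N + 1) / (2 * N) := by field_simp
  rw [sum_range_rowSum, log_stirlingSeq_formula, hratio, log_div (x := 2 * N + 1) (by positivity)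
    (by positivity), log_div hN0.ne' (exp_ne_zero 1), log_exp, log_mul two_ne_zero hN0.ne']
  ring

theorem tendsto_sum_range_rowSum :
    Tendsto (fun N : ℕ => ∑ k ∈ Finset.range N, rowSum (k + 1)) atTop (𝓝 (log π - 1)) := by
  have hstirling : Tendsto (fun N => 2 * log (Stirling.stirlingSeq N)) atTop (𝓝 (log π)) := by
    have := ((continuousAt_log (sqrt_pos.mpr pi_pos).ne').tendsto.comp
      Stirling.tendsto_stirlingSeq_sqrt_pi).const_mul 2
    rwa [log_sqrt pi_pos.le, mul_div_cancel₀ _ two_ne_zero] at this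
  have h2N : Tendsto (fun N : ℕ => 2 * (N : ℝ)) atTop atTop :=
    tendsto_natCast_atTop_atTop.const_mul_atTop two_pos
  have hlog : Tendsto (fun N : ℕ => log (1 + 1 / (2 * (N : ℝ)))) atTop (𝓝 0) := by
    have h : Tendsto (fun N : ℕ => 1 + (2 * (N : ℝ))⁻¹) atTop (𝓝 (1 + 0)) :=
      tendsto_const_nhds.add h2N.inv_tendsto_atTop
    rw [add_zero] at h
    simpa [Function.comp_def, one_div] using (continuousAt_log one_ne_zero).tendsto.comp h
  have hmul : Tendsto (fun N : ℕ => (2 * (N : ℝ) + 1) * log (1 + 1 / (2 * (N : ℝ)))) atTop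
      (𝓝 1) := by
    have h := (tendsto_mul_log_one_add_div_atTop 1).comp h2N |>.add hlog
    rw [add_zero] at h
    exact h.congr fun N => (add_one_mul _ _).symm
  refine (hstirling.sub hmul).congr' ?_
  filter_upwards [eventually_ne_atTop 0] with N hN
  exact (sum_range_rowSum_eq_log_stirlingSeq hN).symm

theorem hasSum_rowSum_succ : HasSum (fun k : ℕ => rowSum (k + 1)) (log π - 1) := by
  have hnonneg (k : ℕ) : 0 ≤ rowSum (k + 1) :=
    (hasSum_rowSum (by linarith [k.cast_nonneg (α := ℝ)])).nonneg fun n => by positivity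
  exact (hasSum_iff_tendsto_nat_of_nonneg hnonneg _).mpr tendsto_sum_range_rowSum

theorem HasSum.of_prod_fiberwise_of_nonneg {β γ : Type*} {f : β × γ → ℝ} (hf : 0 ≤ f)
    {g : β → ℝ} {a : ℝ} (hfib : ∀ b, HasSum (fun c => f (b, c)) (g b)) (hg : HasSum g a) :
    HasSum f a := by
  have hsum : Summable f := (summable_prod_of_nonneg hf).mpr
    ⟨fun b => (hfib b).summable, hg.summable.congr fun b => (hfib b).tsum_eq.symm⟩
  exact (hsum.hasSum.prod_fiberwise hfib).unique hg ▸ hsum.hasSum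

theorem zeta_series_log_pi :
    ∑' n : ℕ, zetaR (2 * (n + 1)) /
      (((n : ℝ) + 1) * (2 * ((n : ℝ) + 1) + 1) * 4 ^ (n + 1)) = Real.log π - 1 := by
  set f : ℕ × ℕ → ℝ := fun p => 1 / ((p.2 : ℝ) + 1) ^ (2 * (p.1 + 1)) /
    (((p.1 : ℝ) + 1) * (2 * ((p.1 : ℝ) + 1) + 1) * 4 ^ (p.1 + 1))
  have hcol (n : ℕ) : HasSum (fun k => f (n, k))
      (zetaR (2 * (n + 1)) / (((n : ℝ) + 1) * (2 * ((n : ℝ) + 1) + 1) * 4 ^ (n + 1))) :=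
    (hasSum_zetaR (m := 2 * (n + 1)) (by omega)).div_const _
  have hrow (k : ℕ) : HasSum (fun n => f (n, k)) (rowSum (k + 1)) := by
    refine (hasSum_rowSum (by linarith [k.cast_nonneg (α := ℝ)])).congr_fun fun n => ?_
    have h4 : (4 : ℝ) ^ (n + 1) = 2 ^ (2 * (n + 1)) := by rw [pow_mul]; norm_num
    simp only [f, h4, div_pow, mul_pow]
    field_simp
    ring
  have hswap : HasSum (f ∘ Prod.swap) (log π - 1) :=
    .of_prod_fiberwise_of_nonneg
      (fun p => by simp only [Pi.zero_apply, Function.comp_apply, f]; positivity)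
      hrow hasSum_rowSum_succ
  exact ((Equiv.prodComm ℕ ℕ).hasSum_iff.mp hswap |>.prod_fiberwise hcol).tsum_eq
end

section
/- Σ_{n=1}^{∞} ζ(2n)·n/16^n = (π/16)·(π/2 − 1). -/
open Real

/-!
Expanding `ζ(2n) = ∑ₖ k^(-2n)` and summing over `n` first (all terms are nonnegative) turns the
series into `∑ₖ r/(1-r)²` with `r = 1/(16k²)`, i.e. into `∑ₖ 16k²/((4k-1)(4k+1))²`. Partial
fractions split each term as `¼(1/(4k-1)² + 1/(4k+1)²) + ¼(1/(4k-1) - 1/(4k+1))`; summed over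
`k ≥ 1`, the first bracket gives the odd squares `∑ 1/(2j+1)² = π²/8` without the term `1`, and
the second gives `1 - π/4` by Leibniz's series.
-/

open Filter Finset Topology

theorem hasSum_succ_mul_geometric {𝕜 : Type*} [NormedDivisionRing 𝕜] {r : 𝕜} (hr : ‖r‖ < 1) :
    HasSum (fun n : ℕ => ((n : 𝕜) + 1) * r ^ (n + 1)) (r / (1 - r) ^ 2) := by
  have h := hasSum_coe_mul_geometric_of_norm_lt_one hr
  rw [← hasSum_nat_add_iff' 1] at h
  simpa using h

theorem hasSum_tsum_swap_of_nonneg {α β : Type*} {f : α → β → ℝ} (hf : ∀ a b, 0 ≤ f a b)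
    {g : α → ℝ} {s : ℝ} (hrow : ∀ a, HasSum (f a) (g a)) (hg : HasSum g s) :
    HasSum (fun b => ∑' a, f a b) s := by
  have hsum : Summable (Function.uncurry f) :=
    (summable_prod_of_nonneg fun p => hf p.1 p.2).2
      ⟨fun a => (hrow a).summable, hg.summable.congr fun a => ((hrow a).tsum_eq).symm⟩
  have hcol : Summable fun b => ∑' a, f a b :=
    (hsum.prod_symm.hasSum.prod_fiberwise fun b => (hsum.prod_symm.prod_factor b).hasSum).summable
  rw [hcol.hasSum_iff, hsum.tsum_comm, ← hg.tsum_eq]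
  exact tsum_congr fun a => (hrow a).tsum_eq

theorem HasSum.even_add_odd_pairs {G : Type*} [AddCommGroup G] [UniformSpace G]
    [IsUniformAddGroup G] [CompleteSpace G] [T2Space G] {f : ℕ → G} {a : G} (hf : HasSum f a) :
    HasSum (fun k => f (2 * k) + f (2 * k + 1)) a := by
  have he : Summable fun k => f (2 * k) :=
    hf.summable.comp_injective (mul_right_injective₀ two_ne_zero)
  have ho : Summable fun k => f (2 * k + 1) :=
    hf.summable.comp_injective fun i j h => by simpa using h
  have := he.hasSum.add ho.hasSum
  rwa [(he.hasSum.even_add_odd ho.hasSum).unique hf] at this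

theorem hasSum_pairs_of_tendsto_of_nonneg {f : ℕ → ℝ} {l : ℝ}
    (hf : Tendsto (fun N => ∑ i ∈ range N, f i) atTop (𝓝 l))
    (hpair : ∀ k, 0 ≤ f (2 * k) + f (2 * k + 1)) :
    HasSum (fun k => f (2 * k) + f (2 * k + 1)) l := by
  have hsplit : ∀ N, ∑ k ∈ range N, (f (2 * k) + f (2 * k + 1)) = ∑ i ∈ range (2 * N), f i := by
    intro N
    induction N with
    | zero => simp
    | succ N ih =>
      rw [sum_range_succ, ih, mul_add, mul_one, sum_range_succ, sum_range_succ, add_assoc]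
  rw [hasSum_iff_tendsto_nat_of_nonneg hpair, funext hsplit]
  exact hf.comp (tendsto_id.const_mul_atTop' two_pos)

theorem summable_one_div_nat_add_one_sq : Summable fun k : ℕ => 1 / ((k : ℝ) + 1) ^ 2 := by
  simpa using (summable_nat_add_iff 1).2 hasSum_zeta_two.summable

theorem hasSum_zetaR_two_mul_mul_pow {y : ℝ} (hy0 : 0 ≤ y) (hy1 : y < 1) :
    HasSum (fun n : ℕ => zetaR (2 * (n + 1)) * ((n : ℝ) + 1) * y ^ (n + 1))
      (∑' k : ℕ, y / ((k : ℝ) + 1) ^ 2 / (1 - y / ((k : ℝ) + 1) ^ 2) ^ 2) := by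
  set r : ℕ → ℝ := fun k => y / ((k : ℝ) + 1) ^ 2 with hr
  have hr0 : ∀ k, 0 ≤ r k := fun k => by positivity
  have hry : ∀ k, r k ≤ y := fun k => div_le_self hy0 (one_le_pow₀ (by simp))
  have hrow : ∀ k, HasSum (fun n : ℕ => ((n : ℝ) + 1) * r k ^ (n + 1)) (r k / (1 - r k) ^ 2) :=
    fun k => hasSum_succ_mul_geometric (by rw [norm_of_nonneg (hr0 k)]; linarith [hry k])
  have hbound : ∀ k, r k / (1 - r k) ^ 2 ≤ y / (1 - y) ^ 2 * (1 / ((k : ℝ) + 1) ^ 2) := by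
    intro k
    calc r k / (1 - r k) ^ 2 ≤ r k / (1 - y) ^ 2 := by
          gcongr
          linarith [hry k]
      _ = y / (1 - y) ^ 2 * (1 / ((k : ℝ) + 1) ^ 2) := by rw [hr]; ring
  have hsum : Summable fun k => r k / (1 - r k) ^ 2 :=
    summable_one_div_nat_add_one_sq.mul_left _ |>.of_nonneg_of_le (fun k => by positivity) hbound
  convert hasSum_tsum_swap_of_nonneg (fun k n => by positivity) hrow hsum.hasSum using 1
  funext n
  rw [zetaR, ← tsum_mul_right, ← tsum_mul_right]
  refine tsum_congr fun k => ?_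
  rw [hr, pow_mul, div_pow]
  ring

theorem hasSum_one_div_two_mul_add_one_sq :
    HasSum (fun j : ℕ => 1 / (2 * (j : ℝ) + 1) ^ 2) (π ^ 2 / 8) := by
  have h := hasSum_zeta_two.even_add_odd_pairs.sub (hasSum_zeta_two.mul_left (1 / 4))
  rw [show π ^ 2 / 6 - 1 / 4 * (π ^ 2 / 6) = π ^ 2 / 8 by ring] at h
  exact h.congr_fun fun j => by push_cast; ring

theorem hasSum_one_div_four_mul_add_three_sq_add_five_sq :
    HasSum (fun k : ℕ => 1 / (4 * (k : ℝ) + 3) ^ 2 + 1 / (4 * (k : ℝ) + 5) ^ 2)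
      (π ^ 2 / 8 - 1) := by
  have h := hasSum_one_div_two_mul_add_one_sq
  rw [← hasSum_nat_add_iff' 1] at h
  simp only [range_one, sum_singleton, CharP.cast_eq_zero, mul_zero, zero_add, one_pow,
    div_one] at h
  exact h.even_add_odd_pairs.congr_fun fun k => by push_cast; ring

theorem hasSum_one_div_four_mul_add_three_sub_five :
    HasSum (fun k : ℕ => 1 / (4 * (k : ℝ) + 3) - 1 / (4 * (k : ℝ) + 5)) (1 - π / 4) := by
  set a : ℕ → ℝ := fun i => (-1) ^ i / (2 * i + 1)
  -- The series `∑ -a (i + 1)` is `1 -` Leibniz's series; pairing its terms gives our summands.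
  have hleibniz : Tendsto (fun N => ∑ i ∈ range N, -a (i + 1)) atTop (𝓝 (1 - π / 4)) := by
    have h := (tendsto_const_nhds (x := (1 : ℝ))).sub
      (tendsto_sum_pi_div_four.comp (tendsto_add_atTop_nat 1))
    refine h.congr fun N => ?_
    simp [Function.comp, sum_range_succ', a]
  have hterm : ∀ k : ℕ,
      -a (2 * k + 1) + -a (2 * k + 1 + 1) = 1 / (4 * (k : ℝ) + 3) - 1 / (4 * (k : ℝ) + 5) := by
    intro k
    simp only [a, pow_succ, pow_mul]
    push_cast
    ring
  refine (hasSum_pairs_of_tendsto_of_nonneg hleibniz fun k => ?_).congr_fun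
    fun k => (hterm k).symm
  rw [hterm, sub_nonneg]
  exact one_div_le_one_div_of_le (by positivity) (by linarith)

theorem zeta_series_sixteen_n :
    ∑' n : ℕ, zetaR (2 * (n + 1)) * ((n : ℝ) + 1) / 16 ^ (n + 1) =
      (π / 16) * (π / 2 - 1) := by
  have hgen := hasSum_zetaR_two_mul_mul_pow (y := 1 / 16) (by norm_num) (by norm_num)
  have hpartial : ∀ k : ℕ, 1 / 16 / ((k : ℝ) + 1) ^ 2 / (1 - 1 / 16 / ((k : ℝ) + 1) ^ 2) ^ 2
      = 1 / 4 * (1 / (4 * (k : ℝ) + 3) ^ 2 + 1 / (4 * (k : ℝ) + 5) ^ 2)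
        + 1 / 4 * (1 / (4 * (k : ℝ) + 3) - 1 / (4 * (k : ℝ) + 5)) := by
    intro k
    have hdenom : 1 - 1 / 16 / ((k : ℝ) + 1) ^ 2
        = (4 * k + 3) * (4 * k + 5) / (16 * (k + 1) ^ 2) := by
      field_simp
      ring
    rw [hdenom]
    field_simp
    ring
  have hvalue := (hasSum_one_div_four_mul_add_three_sq_add_five_sq.mul_left (1 / 4)).add
    (hasSum_one_div_four_mul_add_three_sub_five.mul_left (1 / 4))
  rw [tsum_congr hpartial, hvalue.tsum_eq] at hgen
  convert hgen.tsum_eq using 1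
  · simp only [one_div_pow, mul_one_div]
  · ring
end
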